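/- arXiv:1608.02332 — 3 statements merged into one kernel-verified Lean document; each statement's English description precedes it below -/
import Mathlib

section
/- Let n ≥ 3, let G = C_n □ K_2 be the prism over C_n, and let (N,F) be a near-far-labeling of G. If S and T are two disjoint half-cuts of G (so S, T ⊆ F and S ∩ T = ∅), then S ∪ T is a useful cut. -/
/-- An `(r,t)`-threshold-coloring of the graph `G` with respect to the near-far-labeling
`(N, G.edgeSet \ N)`: a coloring with colors `{0, …, r-1}` such that the colors of the
endvertices of each near edge differ by at most `t`, and the colors of the endvertices of
each far edge differ by more than `t`. -/
def IsThresholdColoring {V : Type*} (G : SimpleGraph V) (N : Set (Sym2 V))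
    (r t : ℕ) (c : V → ℕ) : Prop :=
  (∀ v, c v < r) ∧
  (∀ ⦃u v⦄, G.Adj u v → s(u, v) ∈ N → |(c u : ℤ) - (c v : ℤ)| ≤ (t : ℤ)) ∧
  (∀ ⦃u v⦄, G.Adj u v → s(u, v) ∉ N → (t : ℤ) < |(c u : ℤ) - (c v : ℤ)|)

/-- The prism over the cycle `C_n`: the Cartesian (box) product of the cycle graph
of length `n` with the complete graph `K_2`. Vertices are `v_i = (i, 0)`, `u_i = (i, 1)`. -/
def prismGraph (n : ℕ) : SimpleGraph (Fin n × Fin 2) :=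
  (SimpleGraph.cycleGraph n).boxProd (⊤ : SimpleGraph (Fin 2))

/-- The ladder `L_m = P_m □ K_2`, where `P_m` is the path with `m` edges. -/
def ladderGraph (m : ℕ) : SimpleGraph (Fin (m + 1) × Fin 2) :=
  (SimpleGraph.pathGraph (m + 1)).boxProd (⊤ : SimpleGraph (Fin 2))

/-- The peripheral edge `e̲_i = v_i v_{i+1}` of the prism (indices mod `n`). -/
def underE (n : ℕ) [NeZero n] (i : Fin n) : Sym2 (Fin n × Fin 2) :=
  s((i, 0), (i + 1, 0))

/-- The peripheral edge `ē_i = u_i u_{i+1}` of the prism (indices mod `n`). -/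
def overE (n : ℕ) [NeZero n] (i : Fin n) : Sym2 (Fin n × Fin 2) :=
  s((i, 1), (i + 1, 1))

/-- The spoke `e'_i = u_i v_i` of the prism. -/
def spokeE (n : ℕ) (i : Fin n) : Sym2 (Fin n × Fin 2) :=
  s((i, 0), (i, 1))

open Fin.NatCast in
/-- The set of spokes `e'_{i+1}, e'_{i+2}, …, e'_{i+m}` (indices mod `n`). -/
def spokeRange (n : ℕ) [NeZero n] (i : Fin n) (m : ℕ) : Set (Sym2 (Fin n × Fin 2)) :=
  {e | ∃ j : ℕ, 1 ≤ j ∧ j ≤ m ∧ e = spokeE n (i + (j : Fin n))}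

open Fin.NatCast in
/-- A half-cut of the prism across the squares `σ_i, σ_{i+1}, …, σ_{i+m}` with respect to
the near-far-labeling `(N, E \ N)`: a set of far edges of the form
`{e̲_i, ē_{i+m}, e'_{i+1}, …, e'_{i+m}}` or `{ē_i, e̲_{i+m}, e'_{i+1}, …, e'_{i+m}}`. -/
def IsHalfCut (n : ℕ) [NeZero n] (N S : Set (Sym2 (Fin n × Fin 2))) : Prop :=
  S ⊆ (prismGraph n).edgeSet \ N ∧
  ∃ (i : Fin n) (m : ℕ), m < n ∧
    (S = insert (underE n i) (insert (overE n (i + (m : Fin n))) (spokeRange n i m)) ∨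
     S = insert (overE n i) (insert (underE n (i + (m : Fin n))) (spokeRange n i m)))

/-- A useful cut of the prism with respect to `(N, E \ N)`: a set `S` of far edges for
which there is a partition `{A, Aᶜ}` of the vertex set such that both induced subgraphs
are isomorphic to subgraphs of ladders and `S` is exactly the set of edges joining `A`
to `Aᶜ`. -/
def IsUsefulCut (n : ℕ) (N S : Set (Sym2 (Fin n × Fin 2))) : Prop :=
  S ⊆ (prismGraph n).edgeSet \ N ∧
  ∃ A : Set (Fin n × Fin 2),
    (∃ (m : ℕ) (f : (prismGraph n).induce A →g ladderGraph m), Function.Injective f) ∧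
    (∃ (m : ℕ) (f : (prismGraph n).induce Aᶜ →g ladderGraph m), Function.Injective f) ∧
    S = {e | ∃ a b, a ∈ A ∧ b ∉ A ∧ (prismGraph n).Adj a b ∧ e = s(a, b)}

/-!
Let the two half-cuts have their lower peripheral edges at positions `p ≠ p'` and their upper
ones at `q ≠ q'`. Take for `A` the vertex set whose lower row is the cyclic interval `(p, p']`
and whose upper row differs from the lower row exactly at the spokes of the two half-cuts.
Computing with symmetric differences, the lower row of `A` changes membership exactly at `p`
and `p'`, and the upper row exactly at `q` and `q'`, because the spoke interval of a half-cut
changes membership exactly at its own two peripheral positions. So the edges leaving `A` are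
exactly those of the two half-cuts. The complement of `A` is the same construction with the
half-cuts exchanged. Finally each side has a position `z` at which neither peripheral edge lies
inside it, and cutting the prism open at `z` embeds that side into a ladder.
-/

open scoped symmDiff

namespace Fin

variable {n : ℕ}

theorem val_sub_eq_ite (a b : Fin n) :
    (a - b).val = if b.val ≤ a.val then a.val - b.val else n + a.val - b.val := by
  split_ifs with h
  · exact coe_sub_iff_le.mpr h
  · exact coe_sub_iff_lt.mpr (not_le.mp h)

theorem val_add_one_eq_ite [NeZero n] (a : Fin n) :
    (a + 1).val = if a.val + 1 = n then 0 else a.val + 1 := by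
  obtain ⟨k, rfl⟩ : ∃ k, n = k + 1 := ⟨n - 1, (Nat.sub_add_cancel NeZero.one_le).symm⟩
  simp only [val_add_one, Fin.ext_iff, val_last]
  split_ifs <;> omega

theorem val_sub_eq_val_sub_add_one_add_one [NeZero n] {j z : Fin n} (h : j ≠ z) :
    (j - z).val = (j - (z + 1)).val + 1 := by
  have := j.isLt; have := z.isLt
  simp only [ne_eq, Fin.ext_iff, val_sub_eq_ite, val_add_one_eq_ite] at h ⊢
  split_ifs <;> omega

end Fin

section CyclicInterval

variable {n : ℕ}

/-- The cyclic interval `(a, b]` of `Fin n`; it is empty when `a = b`. -/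
def cycIoc (a b : Fin n) : Set (Fin n) :=
  {j | 0 < (j - a).val ∧ (j - a).val ≤ (b - a).val}

theorem mem_cycIoc {a b j : Fin n} :
    j ∈ cycIoc a b ↔ 0 < (j - a).val ∧ (j - a).val ≤ (b - a).val :=
  Iff.rfl

theorem left_notMem_cycIoc (a b : Fin n) : a ∉ cycIoc a b := by
  simp only [mem_cycIoc, Fin.val_sub_eq_ite, le_refl, if_true, Nat.sub_self]
  omega

theorem right_mem_cycIoc {a b : Fin n} (h : a ≠ b) : b ∈ cycIoc a b := by
  have := a.isLt; have := b.isLt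
  simp only [mem_cycIoc, ne_eq, Fin.ext_iff, Fin.val_sub_eq_ite] at h ⊢
  split_ifs <;> omega

theorem mem_cycIoc_rotate {a b c : Fin n} (hc : c ∈ cycIoc a b) (hcb : c ≠ b) :
    a ∈ cycIoc b c := by
  have := a.isLt; have := b.isLt; have := c.isLt
  simp only [mem_cycIoc, ne_eq, Fin.ext_iff, Fin.val_sub_eq_ite] at *
  split_ifs at * <;> omega

theorem compl_cycIoc {a b : Fin n} (h : a ≠ b) : (cycIoc a b)ᶜ = cycIoc b a := by
  ext j
  have := a.isLt; have := b.isLt; have := j.isLt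
  simp only [mem_cycIoc, Set.mem_compl_iff, ne_eq, Fin.ext_iff, Fin.val_sub_eq_ite] at *
  split_ifs <;> omega

variable [NeZero n]

theorem add_one_mem_cycIoc {a b : Fin n} (h : a ≠ b) : a + 1 ∈ cycIoc a b := by
  have := a.isLt; have := b.isLt
  simp only [mem_cycIoc, ne_eq, Fin.ext_iff, Fin.val_sub_eq_ite, Fin.val_add_one_eq_ite] at h ⊢
  split_ifs <;> omega

theorem add_one_notMem_cycIoc (a b : Fin n) : b + 1 ∉ cycIoc a b := by
  have := a.isLt; have := b.isLt
  simp only [mem_cycIoc, Fin.val_sub_eq_ite, Fin.val_add_one_eq_ite]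
  split_ifs <;> omega

theorem eq_of_notMem_cycIoc_of_add_one_mem {a b j : Fin n} (hj : j ∉ cycIoc a b)
    (hj' : j + 1 ∈ cycIoc a b) : j = a := by
  have := a.isLt; have := b.isLt; have := j.isLt
  simp only [mem_cycIoc, Fin.ext_iff, Fin.val_sub_eq_ite, Fin.val_add_one_eq_ite] at *
  split_ifs at * <;> omega

theorem eq_of_mem_cycIoc_of_add_one_notMem {a b j : Fin n} (hj : j ∈ cycIoc a b)
    (hj' : j + 1 ∉ cycIoc a b) : j = b := by
  have := a.isLt; have := b.isLt; have := j.isLt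
  simp only [mem_cycIoc, Fin.ext_iff, Fin.val_sub_eq_ite, Fin.val_add_one_eq_ite] at *
  split_ifs at * <;> omega

def cycBoundary (R : Set (Fin n)) : Set (Fin n) :=
  R ∆ ((· + 1) ⁻¹' R)

theorem mem_cycBoundary {R : Set (Fin n)} {j : Fin n} :
    j ∈ cycBoundary R ↔ ¬(j ∈ R ↔ j + 1 ∈ R) := by
  simp only [cycBoundary, Set.mem_symmDiff, Set.mem_preimage]
  tauto

theorem cycBoundary_symmDiff (R R' : Set (Fin n)) :
    cycBoundary (R ∆ R') = cycBoundary R ∆ cycBoundary R' := by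
  simp only [cycBoundary, Set.preimage_symmDiff, symmDiff_symmDiff_symmDiff_comm]

theorem cycBoundary_cycIoc (a b : Fin n) : cycBoundary (cycIoc a b) = {a} ∆ {b} := by
  ext j
  have := j.isLt; have := a.isLt; have := b.isLt
  simp only [mem_cycBoundary, Set.mem_symmDiff, Set.mem_singleton_iff, mem_cycIoc, Fin.ext_iff,
    Fin.val_sub_eq_ite, Fin.val_add_one_eq_ite]
  split_ifs <;> omega

end CyclicInterval

def SimpleGraph.edgeBoundary {V : Type*} (G : SimpleGraph V) (X : Set V) : Set (Sym2 V) :=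
  {e | ∃ a b, a ∈ X ∧ b ∉ X ∧ G.Adj a b ∧ e = s(a, b)}

theorem SimpleGraph.mk_mem_edgeBoundary_iff {V : Type*} {G : SimpleGraph V} {X : Set V}
    {a b : V} : s(a, b) ∈ G.edgeBoundary X ↔ G.Adj a b ∧ ¬(a ∈ X ↔ b ∈ X) := by
  constructor
  · rintro ⟨a', b', ha, hb, hadj, he⟩
    rcases Sym2.eq_iff.mp he with ⟨rfl, rfl⟩ | ⟨rfl, rfl⟩
    · exact ⟨hadj, fun h => hb (h.mp ha)⟩
    · exact ⟨hadj.symm, fun h => hb (h.mpr ha)⟩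
  · rintro ⟨hadj, hab⟩
    by_cases ha : a ∈ X
    · exact ⟨a, b, ha, fun hb => hab (iff_of_true ha hb), hadj, rfl⟩
    · exact ⟨b, a, by tauto, ha, hadj.symm, Sym2.eq_swap⟩

section Prism

variable {n : ℕ}

theorem prismGraph_adj [NeZero n] (hn : 1 < n) {j j' : Fin n} {l l' : Fin 2} :
    (prismGraph n).Adj (j, l) (j', l') ↔
      ((j = j' + 1 ∨ j' = j + 1) ∧ l = l') ∨ (l ≠ l' ∧ j = j') := by
  obtain ⟨k, rfl⟩ : ∃ k, n = k + 2 := ⟨n - 2, by omega⟩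
  simp only [prismGraph, SimpleGraph.boxProd_adj, SimpleGraph.cycleGraph_adj,
    sub_eq_iff_eq_add', SimpleGraph.top_adj]

def prismRows (R : Fin 2 → Set (Fin n)) : Set (Fin n × Fin 2) :=
  {x | x.1 ∈ R x.2}

theorem compl_prismRows (R : Fin 2 → Set (Fin n)) :
    (prismRows R)ᶜ = prismRows fun l => (R l)ᶜ :=
  rfl

theorem edgeBoundary_prismRows [NeZero n] (hn : 1 < n) (R : Fin 2 → Set (Fin n)) :
    (prismGraph n).edgeBoundary (prismRows R) =
      underE n '' cycBoundary (R 0) ∪ overE n '' cycBoundary (R 1) ∪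
        spokeE n '' (R 0 ∆ R 1) := by
  ext e
  constructor
  · rintro ⟨⟨j, l⟩, ⟨j', l'⟩, hx, hy, hxy, rfl⟩
    have hb : ¬((j, l) ∈ prismRows R ↔ (j', l') ∈ prismRows R) := fun h => hy (h.mp hx)
    rcases (prismGraph_adj hn).mp hxy with ⟨rfl | rfl, rfl⟩ | ⟨hl, rfl⟩
    · fin_cases l
      · exact Or.inl (Or.inl ⟨j', mem_cycBoundary.mpr (mt Iff.symm hb), Sym2.eq_swap⟩)
      · exact Or.inl (Or.inr ⟨j', mem_cycBoundary.mpr (mt Iff.symm hb), Sym2.eq_swap⟩)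
    · fin_cases l
      · exact Or.inl (Or.inl ⟨j, mem_cycBoundary.mpr hb, rfl⟩)
      · exact Or.inl (Or.inr ⟨j, mem_cycBoundary.mpr hb, rfl⟩)
    · fin_cases l <;> fin_cases l' <;> simp only [ne_eq, not_true_eq_false] at hl
      · exact Or.inr ⟨j, by rw [Set.mem_symmDiff]; tauto, rfl⟩
      · exact Or.inr ⟨j, by rw [Set.mem_symmDiff]; tauto, Sym2.eq_swap⟩
  · have horiz : ∀ {j : Fin n} {l : Fin 2}, (prismGraph n).Adj (j, l) (j + 1, l) :=
      (prismGraph_adj hn).mpr (Or.inl ⟨Or.inr rfl, rfl⟩)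
    rintro ((⟨j, hj, rfl⟩ | ⟨j, hj, rfl⟩) | ⟨j, hj, rfl⟩)
    · exact SimpleGraph.mk_mem_edgeBoundary_iff.mpr ⟨horiz, mem_cycBoundary.mp hj⟩
    · exact SimpleGraph.mk_mem_edgeBoundary_iff.mpr ⟨horiz, mem_cycBoundary.mp hj⟩
    · refine SimpleGraph.mk_mem_edgeBoundary_iff.mpr
        ⟨(prismGraph_adj hn).mpr (Or.inr ⟨by decide, rfl⟩), ?_⟩
      rw [Set.mem_symmDiff] at hj
      tauto

def IsGap [NeZero n] (X : Set (Fin n × Fin 2)) (z : Fin n) : Prop :=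
  ∀ l, (z, l) ∈ X → (z + 1, l) ∉ X

theorem exists_injective_hom_ladderGraph_of_isGap [NeZero n] (hn : 1 < n)
    {X : Set (Fin n × Fin 2)} {z : Fin n} (hz : IsGap X z) :
    ∃ (m : ℕ) (f : (prismGraph n).induce X →g ladderGraph m), Function.Injective f := by
  let f : X → Fin (n + 1) × Fin 2 := fun x => ((x.1.1 - (z + 1)).castSucc, x.1.2)
  have step : ∀ {j l}, (j, l) ∈ X → (j + 1, l) ∈ X →
      (ladderGraph n).Adj ((j - (z + 1)).castSucc, l) ((j + 1 - (z + 1)).castSucc, l) := by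
    intro j l hj hj'
    have hjz : j ≠ z := by rintro rfl; exact hz l hj hj'
    refine Or.inl ⟨SimpleGraph.pathGraph_adj.mpr (Or.inl ?_), rfl⟩
    simp [Fin.val_sub_eq_val_sub_add_one_add_one hjz]
  refine ⟨n, ⟨f, ?_⟩, ?_⟩
  · rintro ⟨⟨j, l⟩, hx⟩ ⟨⟨j', l'⟩, hy⟩ hxy
    rcases (prismGraph_adj hn).mp hxy with ⟨rfl | rfl, rfl⟩ | ⟨hl, rfl⟩
    · exact (step hy hx).symm
    · exact step hx hy
    · exact Or.inr ⟨hl, rfl⟩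
  · rintro ⟨⟨j, l⟩, hx⟩ ⟨⟨j', l'⟩, hy⟩ hxy
    obtain ⟨hj, rfl⟩ := Prod.mk.inj hxy
    obtain rfl := sub_left_injective (Fin.castSucc_injective _ hj)
    rfl

end Prism

open Fin.NatCast in
theorem spokeRange_eq_image {n : ℕ} [NeZero n] (i : Fin n) {m : ℕ} (hm : m < n) :
    spokeRange n i m = spokeE n '' cycIoc i (i + m) := by
  ext e
  constructor
  · rintro ⟨j, hj, hjm, rfl⟩
    refine ⟨i + j, ?_, rfl⟩
    rw [mem_cycIoc, add_sub_cancel_left, add_sub_cancel_left, Fin.val_cast_of_lt hm,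
      Fin.val_cast_of_lt (by omega)]
    omega
  · rintro ⟨k, hk, rfl⟩
    rw [mem_cycIoc, add_sub_cancel_left, Fin.val_cast_of_lt hm] at hk
    exact ⟨(k - i).val, hk.1, hk.2, by rw [Fin.cast_val_eq_self, add_sub_cancel]⟩

/-- The shape of a half-cut: its lower peripheral edge is `e̲_lower`, its upper one `ē_upper`,
and its spokes are those at the positions between them. -/
structure HalfCut (n : ℕ) where
  lower : Fin n
  upper : Fin n
  spokes : Set (Fin n)
  spokes_eq : spokes = cycIoc lower upper ∨ spokes = cycIoc upper lower

namespace HalfCut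

variable {n : ℕ}

/-- The side of the cut `c.edges ∪ d.edges` that follows `c`. -/
def between (c d : HalfCut n) : Set (Fin n × Fin 2) :=
  prismRows ![cycIoc c.lower d.lower, cycIoc c.lower d.lower ∆ (c.spokes ∪ d.spokes)]

theorem compl_between {c d : HalfCut n} (h : c.lower ≠ d.lower) :
    (c.between d)ᶜ = d.between c := by
  rw [between, between, compl_prismRows]
  congr 1
  ext l : 1
  fin_cases l
  · exact compl_cycIoc h
  · ext j
    simp only [Fin.mk_one, Matrix.cons_val_one, Matrix.cons_val_zero, Set.mem_compl_iff,
      Set.mem_symmDiff, Set.mem_union, ← compl_cycIoc h]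
    tauto

variable [NeZero n]

def edges (c : HalfCut n) : Set (Sym2 (Fin n × Fin 2)) :=
  insert (underE n c.lower) (insert (overE n c.upper) (spokeE n '' c.spokes))

theorem cycBoundary_spokes (c : HalfCut n) : cycBoundary c.spokes = {c.lower} ∆ {c.upper} := by
  rcases c.spokes_eq with h | h <;> rw [h, cycBoundary_cycIoc]
  exact symmDiff_comm _ _

variable {c d : HalfCut n}

theorem lower_ne_of_disjoint (h : Disjoint c.edges d.edges) : c.lower ≠ d.lower := fun he =>
  Set.disjoint_left.mp h (Set.mem_insert _ _) (he ▸ Set.mem_insert _ _)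

theorem upper_ne_of_disjoint (h : Disjoint c.edges d.edges) : c.upper ≠ d.upper := fun he =>
  Set.disjoint_left.mp h (Set.mem_insert_of_mem _ (Set.mem_insert _ _))
    (he ▸ Set.mem_insert_of_mem _ (Set.mem_insert _ _))

theorem disjoint_spokes (h : Disjoint c.edges d.edges) : Disjoint c.spokes d.spokes :=
  Set.disjoint_left.mpr fun j hc hd => Set.disjoint_left.mp h
    (Set.mem_insert_of_mem _ (Set.mem_insert_of_mem _ ⟨j, hc, rfl⟩))
    (Set.mem_insert_of_mem _ (Set.mem_insert_of_mem _ ⟨j, hd, rfl⟩))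

theorem cycBoundary_upperRow (h : Disjoint c.spokes d.spokes) :
    cycBoundary (cycIoc c.lower d.lower ∆ (c.spokes ∪ d.spokes)) = {c.upper} ∆ {d.upper} := by
  have hsp : c.spokes ∪ d.spokes = c.spokes ∆ d.spokes := h.symmDiff_eq_sup.symm
  rw [hsp, cycBoundary_symmDiff, cycBoundary_symmDiff, cycBoundary_cycIoc,
    cycBoundary_spokes, cycBoundary_spokes,
    symmDiff_symmDiff_symmDiff_comm ({c.lower} : Set (Fin n)) {c.upper},
    symmDiff_symmDiff_cancel_left]

theorem edgeBoundary_between (hn : 1 < n) (h : Disjoint c.edges d.edges) :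
    (prismGraph n).edgeBoundary (c.between d) = c.edges ∪ d.edges := by
  rw [between, edgeBoundary_prismRows hn]
  simp only [Matrix.cons_val_zero, Matrix.cons_val_one]
  rw [cycBoundary_cycIoc, cycBoundary_upperRow (disjoint_spokes h), symmDiff_symmDiff_cancel_left,
    (Set.disjoint_singleton.mpr (lower_ne_of_disjoint h)).symmDiff_eq_sup,
    (Set.disjoint_singleton.mpr (upper_ne_of_disjoint h)).symmDiff_eq_sup]
  ext e
  simp only [edges, Set.sup_eq_union, Set.image_union, Set.image_singleton, Set.mem_union,
    Set.mem_insert_iff, Set.mem_singleton_iff]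
  tauto

/-- Were there no gap, the peripheral edges inside the side would have to lie in the upper row
at `c.lower` and `d.lower` and in the lower row at `c.upper` and `d.upper`. Then `d.lower` is
the left end of a spoke interval, which must be `(d.lower, d.upper]`; this interval contains
`c.lower` and ends there, so `c.lower = d.upper`, which is inside the side's lower row while
`c.lower` is not. -/
theorem exists_isGap_between (h : Disjoint c.edges d.edges) : ∃ z, IsGap (c.between d) z := by
  set R₀ := cycIoc c.lower d.lower
  set Sp := c.spokes ∪ d.spokes
  have hl := lower_ne_of_disjoint h
  by_contra! hall
  have row : ∀ z, (z ∈ R₀ ∧ z + 1 ∈ R₀) ∨ (z ∈ R₀ ∆ Sp ∧ z + 1 ∈ R₀ ∆ Sp) := fun z => by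
    obtain ⟨l, h₁, h₂⟩ : ∃ l, (z, l) ∈ c.between d ∧ (z + 1, l) ∈ c.between d := by
      simpa only [IsGap, not_forall, not_not, exists_prop] using hall z
    fin_cases l
    exacts [Or.inl ⟨h₁, h₂⟩, Or.inr ⟨h₁, h₂⟩]
  have lower_row : ∀ z ∈ cycBoundary (R₀ ∆ Sp), z ∈ R₀ ∧ z + 1 ∈ R₀ := fun z hz =>
    (row z).resolve_right fun h' => mem_cycBoundary.mp hz (iff_of_true h'.1 h'.2)
  rw [cycBoundary_upperRow (disjoint_spokes h)] at lower_row
  have hcU := lower_row c.upper (Set.mem_symmDiff.mpr (Or.inl ⟨rfl, upper_ne_of_disjoint h⟩))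
  have hdU := lower_row d.upper
    (Set.mem_symmDiff.mpr (Or.inr ⟨rfl, (upper_ne_of_disjoint h).symm⟩))
  have hcL := (row c.lower).resolve_left fun h' => left_notMem_cycIoc _ _ h'.1
  have hdL := (row d.lower).resolve_left fun h' => add_one_notMem_cycIoc _ _ h'.2
  simp only [Set.mem_symmDiff] at hcL hdL
  have hdL₁ : d.lower + 1 ∉ R₀ := add_one_notMem_cycIoc _ _
  have hc_ne : c.upper ≠ d.lower := fun h' => hdL₁ (by rw [← h']; exact hcU.2)
  have hd_ne : d.upper ≠ d.lower := fun h' => hdL₁ (by rw [← h']; exact hdU.2)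
  have hcS₁ : c.lower + 1 ∉ Sp :=
    (hcL.2.resolve_right fun h' => h'.2 (add_one_mem_cycIoc hl)).2
  have hdS : d.lower ∉ Sp := (hdL.1.resolve_right fun h' => h'.2 (right_mem_cycIoc hl)).2
  rcases (hdL.2.resolve_left fun h' => hdL₁ h'.1).1 with hdS₁ | hdS₁
  · have hd : d.lower ∉ c.spokes := fun h' => hdS (Or.inl h')
    rcases c.spokes_eq with hc | hc <;> rw [hc] at hdS₁ hd
    · exact hl (eq_of_notMem_cycIoc_of_add_one_mem hd hdS₁).symm
    · exact hc_ne (eq_of_notMem_cycIoc_of_add_one_mem hd hdS₁).symm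
  · have hd : d.lower ∉ d.spokes := fun h' => hdS (Or.inr h')
    rcases d.spokes_eq with hd' | hd' <;> rw [hd'] at hdS₁ hd
    · have hc : c.lower ∈ cycIoc d.lower d.upper := mem_cycIoc_rotate (a := c.lower) hdU.1 hd_ne
      have hc₁ : c.lower + 1 ∉ cycIoc d.lower d.upper := fun h' => hcS₁ (Or.inr (hd' ▸ h'))
      have hcd : c.lower = d.upper := eq_of_mem_cycIoc_of_add_one_notMem hc hc₁
      exact left_notMem_cycIoc c.lower d.lower (show c.lower ∈ R₀ from hcd ▸ hdU.1)
    · exact hd_ne (eq_of_notMem_cycIoc_of_add_one_mem hd hdS₁).symm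

end HalfCut

open Fin.NatCast in
theorem IsHalfCut.exists_halfCut {n : ℕ} [NeZero n] {N S : Set (Sym2 (Fin n × Fin 2))}
    (hS : IsHalfCut n N S) : ∃ c : HalfCut n, S = c.edges := by
  obtain ⟨-, i, m, hm, rfl | rfl⟩ := hS
  · exact ⟨⟨i, i + m, _, Or.inl rfl⟩, by rw [spokeRange_eq_image i hm]; rfl⟩
  · exact ⟨⟨i + m, i, _, Or.inr rfl⟩, by rw [spokeRange_eq_image i hm, Set.insert_comm]; rfl⟩

theorem union_disjoint_halfCuts_isUsefulCut_general (n : ℕ) [NeZero n] (hn : 3 ≤ n)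
    (N : Set (Sym2 (Fin n × Fin 2)))
    (S T : Set (Sym2 (Fin n × Fin 2)))
    (hS : IsHalfCut n N S) (hT : IsHalfCut n N T) (hST : Disjoint S T) :
    IsUsefulCut n N (S ∪ T) := by
  have hn' : 1 < n := by omega
  obtain ⟨c, rfl⟩ := hS.exists_halfCut
  obtain ⟨d, rfl⟩ := hT.exists_halfCut
  refine ⟨Set.union_subset hS.1 hT.1, c.between d, ?_, ?_,
    (HalfCut.edgeBoundary_between hn' hST).symm⟩
  · obtain ⟨z, hz⟩ := HalfCut.exists_isGap_between hST
    exact exists_injective_hom_ladderGraph_of_isGap hn' hz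
  · rw [HalfCut.compl_between (HalfCut.lower_ne_of_disjoint hST)]
    obtain ⟨z, hz⟩ := HalfCut.exists_isGap_between hST.symm
    exact exists_injective_hom_ladderGraph_of_isGap hn' hz

/-- In a prism with a near-far-labeling, the union of two disjoint half-cuts is a
useful cut. -/
theorem union_disjoint_halfCuts_isUsefulCut (n : ℕ) [NeZero n] (hn : 3 ≤ n)
    (N : Set (Sym2 (Fin n × Fin 2))) (hN : N ⊆ (prismGraph n).edgeSet)
    (S T : Set (Sym2 (Fin n × Fin 2)))
    (hS : IsHalfCut n N S) (hT : IsHalfCut n N T) (hST : Disjoint S T) :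
    IsUsefulCut n N (S ∪ T) :=
  union_disjoint_halfCuts_isUsefulCut_general n hn N S T hS hT hST
end

section
/- Let n ≥ 3, let G = C_n □ K_2 be the prism over C_n, and let (N,F) be a near-far-labeling of G. If G admits a useful cut with respect to (N,F), then G has an (11,1)-threshold-coloring with respect to (N,F). -/
open SimpleGraph

section ThresholdColoring

variable {V W : Type*} {G : SimpleGraph V} {H : SimpleGraph W} {N : Set (Sym2 V)} {r t : ℕ}
  {c : V → ℕ}

theorem isThresholdColoring_iff :
    IsThresholdColoring G N r t c ↔
      (∀ v, c v < r) ∧ ∀ ⦃u v⦄, G.Adj u v → (s(u, v) ∈ N ↔ |(c u : ℤ) - c v| ≤ t) := by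
  unfold IsThresholdColoring
  refine and_congr_right fun _ => ⟨fun ⟨hN, hF⟩ u v huv => ?_, fun h => ⟨?_, ?_⟩⟩
  · exact ⟨hN huv, fun hle => by_contra fun hnot => (hF huv hnot).not_ge hle⟩
  · exact fun u v huv hmem => (h huv).1 hmem
  · exact fun u v huv hnot => lt_of_not_ge fun hle => hnot ((h huv).2 hle)

theorem IsThresholdColoring.comap (f : H →g G) (hc : IsThresholdColoring G N r t c) :
    IsThresholdColoring H (Sym2.map f ⁻¹' N) r t (c ∘ f) := by
  rw [isThresholdColoring_iff] at hc ⊢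
  exact ⟨fun w => hc.1 (f w), fun u v huv => by simpa using hc.2 (f.map_adj huv)⟩

def TotallyThresholdColorable (G : SimpleGraph V) (r t : ℕ) : Prop :=
  ∀ N : Set (Sym2 V), ∃ c, IsThresholdColoring G N r t c

theorem TotallyThresholdColorable.of_injective (f : H →g G) (hf : Function.Injective f)
    (hG : TotallyThresholdColorable G r t) : TotallyThresholdColorable H r t := by
  intro N
  obtain ⟨c, hc⟩ := hG (Sym2.map f '' N)
  refine ⟨c ∘ f, ?_⟩
  simpa only [Set.preimage_image_eq _ (Sym2.map.injective hf)] using hc.comap f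

/-- Colour `A` with `{0, …, r-1}` and `Aᶜ` with `{r+t, …, 2r+t-1}`: then every edge between
`A` and `Aᶜ` is far. -/
theorem exists_isThresholdColoring_of_far_cut (A : Set V)
    (hA : TotallyThresholdColorable (G.induce A) r t)
    (hAc : TotallyThresholdColorable (G.induce Aᶜ) r t)
    (hcut : ∀ ⦃a b⦄, a ∈ A → b ∉ A → G.Adj a b → s(a, b) ∉ N) :
    ∃ c, IsThresholdColoring G N (2 * r + t) t c := by
  classical
  obtain ⟨c₁, hc₁⟩ := hA (Sym2.map (↑) ⁻¹' N)
  obtain ⟨c₂, hc₂⟩ := hAc (Sym2.map (↑) ⁻¹' N)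
  rw [isThresholdColoring_iff] at hc₁ hc₂
  let c : V → ℕ := fun v => if hv : v ∈ A then c₁ ⟨v, hv⟩ else c₂ ⟨v, hv⟩ + (r + t)
  have cross : ∀ ⦃u v⦄, u ∈ A → v ∉ A → G.Adj u v → (s(u, v) ∈ N ↔ |(c u : ℤ) - c v| ≤ t) := by
    intro u v hu hv huv
    have h₁ := hc₁.1 ⟨u, hu⟩
    simp only [c, dif_pos hu, dif_neg hv, hcut hu hv huv, false_iff, not_le]
    rw [abs_sub_comm, abs_of_pos (by omega)]
    omega
  refine ⟨c, isThresholdColoring_iff.2 ⟨fun v => ?_, fun u v huv => ?_⟩⟩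
  · by_cases hv : v ∈ A
    · simp only [c, dif_pos hv]; linarith [hc₁.1 ⟨v, hv⟩]
    · simp only [c, dif_neg hv]; linarith [hc₂.1 ⟨v, hv⟩]
  by_cases hu : u ∈ A <;> by_cases hv : v ∈ A
  · simpa [c, hu, hv] using hc₁.2 (show (G.induce A).Adj ⟨u, hu⟩ ⟨v, hv⟩ from huv)
  · exact cross hu hv huv
  · rw [Sym2.eq_swap, abs_sub_comm]; exact cross hv hu huv.symm
  · simpa [c, hu, hv] using hc₂.2 (show (G.induce Aᶜ).Adj ⟨u, hu⟩ ⟨v, hv⟩ from huv)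

end ThresholdColoring

theorem exists_seq_of_forall_exists_step {α : Type*} {P : ℕ → α → Prop}
    {R : ℕ → α → α → Prop} (h₀ : ∃ x, P 0 x) (hstep : ∀ n x, P n x → ∃ y, P (n + 1) y ∧ R n x y) :
    ∃ f : ℕ → α, ∀ n, P n (f n) ∧ R n (f n) (f (n + 1)) := by
  choose g hg using hstep
  let F : ∀ n, {x // P n x} := fun n =>
    Nat.rec ⟨h₀.choose, h₀.choose_spec⟩ (fun n x => ⟨g n x x.2, (hg n x x.2).1⟩) n
  exact ⟨fun n => (F n).1, fun n => ⟨(F n).2, (hg n _ (F n).2).2⟩⟩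

/-- The colourings `x` of a column of the ladder from which every continuation whose next spoke
is near (resp. far) can be coloured with `{0, …, 4}`; colouring column by column without this
look-ahead gets stuck. -/
def LadderReady (near : Bool) (x : Fin 2 → Fin 5) : Prop :=
  if near then ((x 0 : ℕ) + x 1) % 3 ≠ 1 else (x 0 : ℕ) % 3 ≠ (x 1 : ℕ) % 3

instance (near : Bool) (x : Fin 2 → Fin 5) : Decidable (LadderReady near x) := by
  unfold LadderReady; infer_instance

theorem ladderReady_start : ∀ l l' : Bool, ∃ x : Fin 2 → Fin 5,
    (l ↔ |(x 0 : ℤ) - x 1| ≤ 1) ∧ LadderReady l' x := by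
  decide

theorem ladderReady_step : ∀ (l l' : Bool) (rail : Fin 2 → Bool) (x : Fin 2 → Fin 5),
    LadderReady l x → ∃ y : Fin 2 → Fin 5, ((l ↔ |(y 0 : ℤ) - y 1| ≤ 1) ∧ LadderReady l' y) ∧
      ∀ k, (rail k ↔ |(x k : ℤ) - y k| ≤ 1) := by
  decide

theorem hasse_nat_boxProd_top_totallyThresholdColorable :
    TotallyThresholdColorable (hasse ℕ □ (⊤ : SimpleGraph (Fin 2))) 5 1 := by
  classical
  intro N
  let spoke : ℕ → Bool := fun j => decide (s((j, 0), (j, 1)) ∈ N)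
  let rail : ℕ → Fin 2 → Bool := fun j k => decide (s((j, k), (j + 1, k)) ∈ N)
  obtain ⟨col, hcol⟩ := exists_seq_of_forall_exists_step
    (P := fun j x => (spoke j ↔ |(x 0 : ℤ) - x 1| ≤ 1) ∧ LadderReady (spoke (j + 1)) x)
    (R := fun j x y => ∀ k, (rail j k ↔ |(x k : ℤ) - y k| ≤ 1))
    (ladderReady_start _ _) (fun j x hx => ladderReady_step _ _ (rail j) x hx.2)
  have hspoke (j : ℕ) : s((j, 0), (j, 1)) ∈ N ↔ |(col j 0 : ℤ) - col j 1| ≤ 1 := by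
    simpa [spoke] using (hcol j).1.1
  have hrail (j : ℕ) (k : Fin 2) :
      s((j, k), (j + 1, k)) ∈ N ↔ |(col j k : ℤ) - col (j + 1) k| ≤ 1 := by
    simpa [rail] using (hcol j).2 k
  refine ⟨fun v => col v.1 v.2, isThresholdColoring_iff.2 ⟨fun v => (col v.1 v.2).2, ?_⟩⟩
  rintro ⟨i, k⟩ ⟨j, k'⟩ hadj
  simp only [boxProd_adj, hasse_adj, Nat.covBy_iff_add_one_eq, top_adj] at hadj
  rcases hadj with ⟨rfl | rfl, rfl⟩ | ⟨hk, rfl⟩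
  · simpa using hrail i k
  · simpa [Sym2.eq_swap, abs_sub_comm] using hrail j k
  · fin_cases k <;> fin_cases k' <;> simp at hk
    · simpa using hspoke i
    · simpa [Sym2.eq_swap, abs_sub_comm] using hspoke i

theorem ladderGraph_totallyThresholdColorable (m : ℕ) :
    TotallyThresholdColorable (ladderGraph m) 5 1 := by
  refine hasse_nat_boxProd_top_totallyThresholdColorable.of_injective
    ⟨Prod.map Fin.val id, fun {u v} huv => ?_⟩ (Fin.val_injective.prodMap Function.injective_id)
  simp only [ladderGraph, boxProd_adj, pathGraph_adj] at huv
  simp only [Prod.map_fst, Prod.map_snd, id_eq, boxProd_adj, hasse_adj,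
    Nat.covBy_iff_add_one_eq, Fin.val_inj]
  exact huv

theorem prism_usefulCut_threshold_coloring_general (n : ℕ)
    (N : Set (Sym2 (Fin n × Fin 2)))
    (h : ∃ S, IsUsefulCut n N S) :
    ∃ c : Fin n × Fin 2 → ℕ, IsThresholdColoring (prismGraph n) N 11 1 c := by
  obtain ⟨S, hSF, A, ⟨m₁, f₁, hf₁⟩, ⟨m₂, f₂, hf₂⟩, rfl⟩ := h
  exact exists_isThresholdColoring_of_far_cut A
    ((ladderGraph_totallyThresholdColorable m₁).of_injective f₁ hf₁)
    ((ladderGraph_totallyThresholdColorable m₂).of_injective f₂ hf₂)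
    fun a b ha hb hab => (hSF ⟨a, b, ha, hb, hab, rfl⟩).2

/-- If a prism with a near-far-labeling admits a useful cut, then it has an
`(11,1)`-threshold-coloring with respect to that labeling. -/
theorem prism_usefulCut_threshold_coloring (n : ℕ) (hn : 3 ≤ n)
    (N : Set (Sym2 (Fin n × Fin 2))) (hN : N ⊆ (prismGraph n).edgeSet)
    (h : ∃ S, IsUsefulCut n N S) :
    ∃ c : Fin n × Fin 2 → ℕ, IsThresholdColoring (prismGraph n) N 11 1 c :=
  prism_usefulCut_threshold_coloring_general n N h
end

section
/- Let n ≥ 4, let G = C_n □ K_2 be the prism over C_n, and let (N,F) be a near-far-labeling of G such that: (i) G contains no two disjoint half-cuts; (ii) every vertex of G is incident with at least one near edge; and (iii) G has no balanced parallel square whose two spokes are both far. Then G contains an unbalanced square. -/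
open scoped Classical in
/-- The number of near edges of the square `σ_i` of the prism (its edges being
`e̲_i, ē_i, e'_i, e'_{i+1}`) with respect to the near-far-labeling `(N, E \ N)`. -/
noncomputable def nearCount (n : ℕ) [NeZero n] (N : Set (Sym2 (Fin n × Fin 2)))
    (i : Fin n) : ℕ :=
  (if underE n i ∈ N then 1 else 0) + (if overE n i ∈ N then 1 else 0) +
    (if spokeE n i ∈ N then 1 else 0) + (if spokeE n (i + 1) ∈ N then 1 else 0)

/-- The square `σ_i` is balanced (exactly two near and two far edges), parallel (its two
near edges form a matching), and its two spokes are far; equivalently, its peripheral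
edges are near and its spokes are far. -/
def IsBalancedParallelFarSpokes (n : ℕ) [NeZero n] (N : Set (Sym2 (Fin n × Fin 2)))
    (i : Fin n) : Prop :=
  underE n i ∈ N ∧ overE n i ∈ N ∧ spokeE n i ∉ N ∧ spokeE n (i + 1) ∉ N

/-!
Suppose every square is balanced. By (iii) no two consecutive spokes are far, so there is a
near spoke `e'_j` with `e'_{j+2}` near as well. A near spoke `e'_j` yields a half-cut among the
edges of `σ_j ∪ σ_{j+1}` other than `e'_j, e'_{j+2}`: if `e'_{j+1}` is near, balance makes both
peripheral edges of `σ_j` far; if `e'_{j+1}` is far, then `e'_{j+2}` is near, each of `σ_j`,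
`σ_{j+1}` has exactly one near peripheral edge, (ii) at `v_{j+1}` and `u_{j+1}` puts these on
opposite sides, and so the two far ones and `e'_{j+1}` form a half-cut across `σ_j, σ_{j+1}`. For
`n ≥ 4` the half-cuts obtained from `j` and `j + 2` are disjoint, contradicting (i).
-/

open Fin.NatCast Fin.CommRing

lemma prismGraph_adj_spoke {n : ℕ} (i : Fin n) : (prismGraph n).Adj (i, 0) (i, 1) := by
  simp [prismGraph, SimpleGraph.boxProd_adj]

lemma spokeE_mem_edgeSet {n : ℕ} (i : Fin n) : spokeE n i ∈ (prismGraph n).edgeSet :=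
  prismGraph_adj_spoke i

lemma spokeE_inj {n : ℕ} {i j : Fin n} : spokeE n i = spokeE n j ↔ i = j := by
  simp [spokeE]

section

variable {n : ℕ} [NeZero n] {N : Set (Sym2 (Fin n × Fin 2))}

lemma Fin.add_natCast_ne_self {k : ℕ} (hk : 0 < k) (hkn : k < n) (j : Fin n) :
    j + k ≠ j := by
  rw [Ne, add_eq_left, Fin.natCast_eq_zero]
  exact fun h => absurd (Nat.le_of_dvd hk h) (by omega)

lemma SimpleGraph.cycleGraph_adj_iff (hn : 2 ≤ n) {u v : Fin n} :
    (SimpleGraph.cycleGraph n).Adj u v ↔ v = u + 1 ∨ u = v + 1 := by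
  obtain ⟨m, rfl⟩ : ∃ m, n = m + 2 := ⟨n - 2, by omega⟩
  rw [SimpleGraph.cycleGraph_adj, sub_eq_iff_eq_add', sub_eq_iff_eq_add', or_comm]

lemma prismGraph_adj_add_one (hn : 2 ≤ n) (i : Fin n) (b : Fin 2) :
    (prismGraph n).Adj (i, b) (i + 1, b) := by
  simp [prismGraph, SimpleGraph.boxProd_adj, SimpleGraph.cycleGraph_adj_iff hn]

lemma underE_mem_edgeSet (hn : 2 ≤ n) (i : Fin n) : underE n i ∈ (prismGraph n).edgeSet :=
  prismGraph_adj_add_one hn i 0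

lemma overE_mem_edgeSet (hn : 2 ≤ n) (i : Fin n) : overE n i ∈ (prismGraph n).edgeSet :=
  prismGraph_adj_add_one hn i 1

lemma sym2_eq_of_prismGraph_adj (hn : 2 ≤ n) {i : Fin n} {b : Fin 2} {w : Fin n × Fin 2}
    (h : (prismGraph n).Adj (i + 1, b) w) :
    s((i + 1, b), w) = s((i, b), (i + 1, b)) ∨
      s((i + 1, b), w) = s((i + 1, b), (i + 1 + 1, b)) ∨
      s((i + 1, b), w) = s((i + 1, 0), (i + 1, 1)) := by
  obtain ⟨c, d⟩ := w
  rcases h with ⟨hc, rfl⟩ | ⟨hd, rfl⟩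
  · rcases (SimpleGraph.cycleGraph_adj_iff hn).1 hc with rfl | h
    · exact Or.inr (Or.inl rfl)
    · exact Or.inl (by rw [add_right_cancel h, Sym2.eq_swap])
  · right; right
    fin_cases b <;> fin_cases d <;> simp_all [Sym2.eq_swap]

lemma near_edge_at_vertex (hn : 2 ≤ n)
    (hnear : ∀ v : Fin n × Fin 2, ∃ w, (prismGraph n).Adj v w ∧ s(v, w) ∈ N)
    (i : Fin n) (b : Fin 2) :
    s((i, b), (i + 1, b)) ∈ N ∨ s((i + 1, b), (i + 1 + 1, b)) ∈ N ∨
      spokeE n (i + 1) ∈ N := by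
  obtain ⟨w, hw, hwN⟩ := hnear (i + 1, b)
  rcases sym2_eq_of_prismGraph_adj hn hw with h | h | h <;> rw [h] at hwN <;> tauto

lemma peripheral_eq_peripheral_iff (hn : 3 ≤ n) {i j : Fin n} {b c : Fin 2} :
    s((i, b), (i + 1, b)) = s((j, c), (j + 1, c)) ↔ i = j ∧ b = c := by
  refine ⟨fun h => ?_, by rintro ⟨rfl, rfl⟩; rfl⟩
  simp only [Sym2.eq_iff, Prod.mk.injEq] at h
  rcases h with ⟨⟨hij, hbc⟩, -⟩ | ⟨⟨rfl, hbc⟩, hj, -⟩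
  · exact ⟨hij, hbc⟩
  · refine absurd ?_ (Fin.add_natCast_ne_self (k := 2) (by omega) (by omega) j)
    push_cast; linear_combination hj

lemma underE_inj (hn : 3 ≤ n) {i j : Fin n} : underE n i = underE n j ↔ i = j := by
  simp [underE, peripheral_eq_peripheral_iff hn]

lemma overE_inj (hn : 3 ≤ n) {i j : Fin n} : overE n i = overE n j ↔ i = j := by
  simp [overE, peripheral_eq_peripheral_iff hn]

lemma underE_ne_overE (i j : Fin n) : underE n i ≠ overE n j := by
  simp [underE, overE]

lemma underE_ne_spokeE (i j : Fin n) : underE n i ≠ spokeE n j := by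
  simp [underE, spokeE]

lemma overE_ne_spokeE (i j : Fin n) : overE n i ≠ spokeE n j := by
  simp [overE, spokeE]

/-- The edges of `σ_j ∪ σ_{j+1}` other than the outer spokes `e'_j`, `e'_{j+2}`. -/
def squarePairInnerEdges (n : ℕ) [NeZero n] (j : Fin n) : Set (Sym2 (Fin n × Fin 2)) :=
  {underE n j, overE n j, underE n (j + 1), overE n (j + 1), spokeE n (j + 1)}

lemma disjoint_squarePairInnerEdges (hn : 4 ≤ n) (j : Fin n) :
    Disjoint (squarePairInnerEdges n j) (squarePairInnerEdges n (j + 1 + 1)) := by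
  have h1 := Fin.add_natCast_ne_self (k := 1) (by omega) (by omega) j
  have h2 := Fin.add_natCast_ne_self (k := 2) (by omega) (by omega) j
  have h3 := Fin.add_natCast_ne_self (k := 3) (by omega) (by omega) j
  push_cast at h1 h2 h3
  have h02 : j ≠ j + 1 + 1 := fun h => h2 (by linear_combination -h)
  have h03 : j ≠ j + 1 + 1 + 1 := fun h => h3 (by linear_combination -h)
  have h12 : j + 1 ≠ j + 1 + 1 := fun h => h1 (by linear_combination -h)
  have h13 : j + 1 ≠ j + 1 + 1 + 1 := fun h => h2 (by linear_combination -h)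
  rw [Set.disjoint_left]
  rintro e (rfl | rfl | rfl | rfl | rfl) <;>
    simp [squarePairInnerEdges, underE_inj (by omega : 3 ≤ n), overE_inj (by omega : 3 ≤ n),
      spokeE_inj, underE_ne_overE, (underE_ne_overE _ _).symm, underE_ne_spokeE,
      overE_ne_spokeE, (underE_ne_spokeE _ _).symm, (overE_ne_spokeE _ _).symm, *]

lemma spokeRange_zero (i : Fin n) : spokeRange n i 0 = ∅ := by
  ext e
  simp only [spokeRange, Set.mem_ofPred_eq, Set.mem_empty_iff_false, iff_false]
  omega

lemma spokeRange_one (i : Fin n) : spokeRange n i 1 = {spokeE n (i + 1)} := by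
  ext e
  simp only [spokeRange, Set.mem_ofPred_eq, Set.mem_singleton_iff]
  constructor
  · rintro ⟨j, hj1, hj2, rfl⟩
    obtain rfl : j = 1 := by omega
    rw [Nat.cast_one]
  · rintro rfl
    exact ⟨1, le_rfl, le_rfl, by rw [Nat.cast_one]⟩

lemma isHalfCut_square (hn : 2 ≤ n) {i : Fin n} (hu : underE n i ∉ N) (ho : overE n i ∉ N) :
    IsHalfCut n N {underE n i, overE n i} := by
  refine ⟨?_, i, 0, by omega, Or.inl ?_⟩
  · rintro e (rfl | rfl)
    exacts [⟨underE_mem_edgeSet hn i, hu⟩, ⟨overE_mem_edgeSet hn i, ho⟩]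
  · rw [spokeRange_zero, Nat.cast_zero, add_zero, insert_empty_eq]

lemma isHalfCut_underE_overE (hn : 2 ≤ n) {i : Fin n} (hu : underE n i ∉ N)
    (ho : overE n (i + 1) ∉ N) (hs : spokeE n (i + 1) ∉ N) :
    IsHalfCut n N {underE n i, overE n (i + 1), spokeE n (i + 1)} := by
  refine ⟨?_, i, 1, by omega, Or.inl ?_⟩
  · rintro e (rfl | rfl | rfl)
    exacts [⟨underE_mem_edgeSet hn _, hu⟩, ⟨overE_mem_edgeSet hn _, ho⟩,
      ⟨spokeE_mem_edgeSet _, hs⟩]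
  · rw [spokeRange_one, Nat.cast_one]

lemma isHalfCut_overE_underE (hn : 2 ≤ n) {i : Fin n} (ho : overE n i ∉ N)
    (hu : underE n (i + 1) ∉ N) (hs : spokeE n (i + 1) ∉ N) :
    IsHalfCut n N {overE n i, underE n (i + 1), spokeE n (i + 1)} := by
  refine ⟨?_, i, 1, by omega, Or.inr ?_⟩
  · rintro e (rfl | rfl | rfl)
    exacts [⟨overE_mem_edgeSet hn _, ho⟩, ⟨underE_mem_edgeSet hn _, hu⟩,
      ⟨spokeE_mem_edgeSet _, hs⟩]
  · rw [spokeRange_one, Nat.cast_one]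

lemma spokeE_mem_or_of_nearCount_eq_two {i : Fin n} (h : nearCount n N i = 2)
    (hpar : ¬ IsBalancedParallelFarSpokes n N i) :
    spokeE n i ∈ N ∨ spokeE n (i + 1) ∈ N := by
  unfold nearCount at h
  unfold IsBalancedParallelFarSpokes at hpar
  split_ifs at h <;> first | omega | tauto

lemma peripheral_not_mem_of_nearCount_eq_two {i : Fin n} (h : nearCount n N i = 2)
    (hs : spokeE n i ∈ N) (hs₁ : spokeE n (i + 1) ∈ N) :
    underE n i ∉ N ∧ overE n i ∉ N := by
  unfold nearCount at h
  split_ifs at h <;> first | omega | tauto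

lemma underE_mem_iff_of_nearCount_eq_two {i : Fin n} (h : nearCount n N i = 2)
    (hs : spokeE n i ∈ N ↔ spokeE n (i + 1) ∉ N) :
    underE n i ∈ N ↔ overE n i ∉ N := by
  unfold nearCount at h
  split_ifs at h <;> first | omega | tauto

lemma exists_halfCut_across_far_spoke (hn : 3 ≤ n)
    (hnear : ∀ v : Fin n × Fin 2, ∃ w, (prismGraph n).Adj v w ∧ s(v, w) ∈ N) {j : Fin n}
    (hj : nearCount n N j = 2) (hj₁ : nearCount n N (j + 1) = 2)
    (hs : spokeE n j ∈ N) (hs₁ : spokeE n (j + 1) ∉ N) (hs₂ : spokeE n (j + 1 + 1) ∈ N) :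
    ∃ S, IsHalfCut n N S ∧ S ⊆ squarePairInnerEdges n j := by
  have hσ := underE_mem_iff_of_nearCount_eq_two hj (by tauto)
  have hσ₁ := underE_mem_iff_of_nearCount_eq_two hj₁ (by tauto)
  have hv : underE n j ∈ N ∨ underE n (j + 1) ∈ N ∨ spokeE n (j + 1) ∈ N :=
    near_edge_at_vertex (by omega) hnear j 0
  have hu : overE n j ∈ N ∨ overE n (j + 1) ∈ N ∨ spokeE n (j + 1) ∈ N :=
    near_edge_at_vertex (by omega) hnear j 1
  by_cases h : underE n j ∈ N
  · refine ⟨_, isHalfCut_overE_underE (by omega) (hσ.1 h) ?_ hs₁, ?_⟩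
    · tauto
    · simp [squarePairInnerEdges, Set.insert_subset_iff]
  · refine ⟨_, isHalfCut_underE_overE (by omega) h ?_ hs₁, ?_⟩
    · tauto
    · simp [squarePairInnerEdges, Set.insert_subset_iff]

lemma exists_halfCut_subset_squarePairInnerEdges (hn : 3 ≤ n)
    (hnear : ∀ v : Fin n × Fin 2, ∃ w, (prismGraph n).Adj v w ∧ s(v, w) ∈ N)
    (hbal : ∀ i, nearCount n N i = 2) (hpar : ∀ i, ¬ IsBalancedParallelFarSpokes n N i)
    {j : Fin n} (hs : spokeE n j ∈ N) :
    ∃ S, IsHalfCut n N S ∧ S ⊆ squarePairInnerEdges n j := by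
  by_cases hs₁ : spokeE n (j + 1) ∈ N
  · obtain ⟨hu, ho⟩ := peripheral_not_mem_of_nearCount_eq_two (hbal j) hs hs₁
    refine ⟨_, isHalfCut_square (by omega) hu ho, ?_⟩
    simp [squarePairInnerEdges, Set.insert_subset_iff]
  · have hs₂ :=
      (spokeE_mem_or_of_nearCount_eq_two (hbal (j + 1)) (hpar (j + 1))).resolve_left hs₁
    exact exists_halfCut_across_far_spoke hn hnear (hbal j) (hbal (j + 1)) hs hs₁ hs₂

lemma exists_spokeE_mem_and_spokeE_add_two_mem (hbal : ∀ i, nearCount n N i = 2)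
    (hpar : ∀ i, ¬ IsBalancedParallelFarSpokes n N i) :
    ∃ j, spokeE n j ∈ N ∧ spokeE n (j + 1 + 1) ∈ N := by
  have hnext (i : Fin n) := spokeE_mem_or_of_nearCount_eq_two (hbal i) (hpar i)
  obtain ⟨i, hi⟩ : ∃ i, spokeE n i ∈ N := (hnext 0).elim (⟨0, ·⟩) (⟨0 + 1, ·⟩)
  by_cases hi₂ : spokeE n (i + 1 + 1) ∈ N
  · exact ⟨i, hi, hi₂⟩
  · exact ⟨i + 1, (hnext (i + 1)).resolve_right hi₂, (hnext (i + 1 + 1)).resolve_left hi₂⟩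

end

theorem prism_exists_unbalanced_square_general (n : ℕ) [NeZero n] (hn : 4 ≤ n)
    (N : Set (Sym2 (Fin n × Fin 2)))
    (h1 : ¬ ∃ S T, IsHalfCut n N S ∧ IsHalfCut n N T ∧ Disjoint S T)
    (h2 : ∀ v : Fin n × Fin 2, ∃ w, (prismGraph n).Adj v w ∧ s(v, w) ∈ N)
    (h3 : ∀ i : Fin n, ¬ IsBalancedParallelFarSpokes n N i) :
    ∃ i : Fin n, nearCount n N i ≠ 2 := by
  by_contra! hbal
  obtain ⟨j, hj, hj₂⟩ := exists_spokeE_mem_and_spokeE_add_two_mem hbal h3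
  obtain ⟨S, hS, hSj⟩ := exists_halfCut_subset_squarePairInnerEdges (by omega) h2 hbal h3 hj
  obtain ⟨T, hT, hTj⟩ := exists_halfCut_subset_squarePairInnerEdges (by omega) h2 hbal h3 hj₂
  exact h1 ⟨S, T, hS, hT, (disjoint_squarePairInnerEdges hn j).mono hSj hTj⟩

/-- Subclaim: if `n ≥ 4` and the labeled prism has (i) no two disjoint half-cuts,
(ii) every vertex incident with a near edge, and (iii) no balanced parallel square with
far spokes, then some square is unbalanced (its edges do not split two near, two far). -/
theorem prism_exists_unbalanced_square (n : ℕ) [NeZero n] (hn : 4 ≤ n)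
    (N : Set (Sym2 (Fin n × Fin 2))) (hN : N ⊆ (prismGraph n).edgeSet)
    (h1 : ¬ ∃ S T, IsHalfCut n N S ∧ IsHalfCut n N T ∧ Disjoint S T)
    (h2 : ∀ v : Fin n × Fin 2, ∃ w, (prismGraph n).Adj v w ∧ s(v, w) ∈ N)
    (h3 : ∀ i : Fin n, ¬ IsBalancedParallelFarSpokes n N i) :
    ∃ i : Fin n, nearCount n N i ≠ 2 :=
  prism_exists_unbalanced_square_general n hn N h1 h2 h3
end
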